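/- Let X be a symmetric solution of CGDARE(Σ). Then the closed-loop matrix A_X is singular if and only if rank R < rank R_X or the matrix A − B R† Sᵀ is singular. -/

import Mathlib

open Matrix

-- The Moore–Penrose pseudoinverse of a real matrix, characterised by the four
-- Penrose equations (it exists and is unique for every real matrix).
open Classical in
noncomputable def mpinv {α β : Type*} [Fintype α] [Fintype β]
    (M : Matrix α β ℝ) : Matrix β α ℝ :=
  if h : ∃ P : Matrix β α ℝ,
      M * P * M = M ∧ P * M * P = P ∧ (M * P)ᵀ = M * P ∧ (P * M)ᵀ = P * M
  then h.choose else 0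

/-- `R_X = R + BᵀXB`. -/
noncomputable def RX {ι κ : Type*} [Fintype ι] [Fintype κ]
    (R : Matrix κ κ ℝ) (B : Matrix ι κ ℝ) (X : Matrix ι ι ℝ) : Matrix κ κ ℝ :=
  R + Bᵀ * X * B

/-- `S_X = AᵀXB + S`. -/
noncomputable def SX {ι κ : Type*} [Fintype ι] [Fintype κ]
    (A : Matrix ι ι ℝ) (B S : Matrix ι κ ℝ) (X : Matrix ι ι ℝ) : Matrix ι κ ℝ :=
  Aᵀ * X * B + S

/-- `K_X = R_X† S_Xᵀ`. -/
noncomputable def KX {ι κ : Type*} [Fintype ι] [Fintype κ]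
    (A : Matrix ι ι ℝ) (B S : Matrix ι κ ℝ) (R : Matrix κ κ ℝ) (X : Matrix ι ι ℝ) :
    Matrix κ ι ℝ :=
  mpinv (RX R B X) * (SX A B S X)ᵀ

/-- The closed-loop matrix `A_X = A - B K_X`. -/
noncomputable def AX {ι κ : Type*} [Fintype ι] [Fintype κ]
    (A : Matrix ι ι ℝ) (B S : Matrix ι κ ℝ) (R : Matrix κ κ ℝ) (X : Matrix ι ι ℝ) :
    Matrix ι ι ℝ :=
  A - B * KX A B S R X

/-- The kernel condition `ker R_X ⊆ ker S_X`. -/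
def KerCond {ι κ : Type*} [Fintype ι] [Fintype κ]
    (A : Matrix ι ι ℝ) (B S : Matrix ι κ ℝ) (R : Matrix κ κ ℝ) (X : Matrix ι ι ℝ) : Prop :=
  ∀ v : κ → ℝ, (RX R B X).mulVec v = 0 → (SX A B S X).mulVec v = 0

/-- The Riccati operator `𝔇(X) = X - AᵀXA + S_X R_X† S_Xᵀ - Q`. -/
noncomputable def DOp {ι κ : Type*} [Fintype ι] [Fintype κ]
    (A Q : Matrix ι ι ℝ) (B S : Matrix ι κ ℝ) (R : Matrix κ κ ℝ) (X : Matrix ι ι ℝ) :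
    Matrix ι ι ℝ :=
  X - Aᵀ * X * A + SX A B S X * mpinv (RX R B X) * (SX A B S X)ᵀ - Q

/-- The Riccati map `ℛ(X) = AᵀXA - S_X R_X† S_Xᵀ + Q`. -/
noncomputable def Ricc {ι κ : Type*} [Fintype ι] [Fintype κ]
    (A Q : Matrix ι ι ℝ) (B S : Matrix ι κ ℝ) (R : Matrix κ κ ℝ) (X : Matrix ι ι ℝ) :
    Matrix ι ι ℝ :=
  Aᵀ * X * A - SX A B S X * mpinv (RX R B X) * (SX A B S X)ᵀ + Q

/-- `X` is a symmetric solution of CGDARE(Σ): it is symmetric, satisfies the GDARE and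
the kernel condition `ker R_X ⊆ ker S_X`. -/
def IsCGDARESolution {ι κ : Type*} [Fintype ι] [Fintype κ]
    (A Q : Matrix ι ι ℝ) (B S : Matrix ι κ ℝ) (R : Matrix κ κ ℝ) (X : Matrix ι ι ℝ) : Prop :=
  Xᵀ = X ∧ X = Ricc A Q B S R X ∧ KerCond A B S R X

/-- The matrix `N = [[A, 0, B], [Q, -I, S], [Sᵀ, 0, R]]` of the extended symplectic pencil. -/
noncomputable def Nmat {n m : ℕ} (A Q : Matrix (Fin n) (Fin n) ℝ)
    (B S : Matrix (Fin n) (Fin m) ℝ) (R : Matrix (Fin m) (Fin m) ℝ) :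
    Matrix (Fin n ⊕ (Fin n ⊕ Fin m)) (Fin n ⊕ (Fin n ⊕ Fin m)) ℝ :=
  fromBlocks A (fromCols 0 B) (fromRows Q Sᵀ) (fromBlocks (-1) S 0 R)

/-- The matrix `M = [[I, 0, 0], [0, -Aᵀ, 0], [0, -Bᵀ, 0]]` of the extended symplectic pencil. -/
noncomputable def Mmat {n m : ℕ} (A : Matrix (Fin n) (Fin n) ℝ)
    (B : Matrix (Fin n) (Fin m) ℝ) :
    Matrix (Fin n ⊕ (Fin n ⊕ Fin m)) (Fin n ⊕ (Fin n ⊕ Fin m)) ℝ :=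
  fromBlocks 1 0 0 (fromBlocks (-Aᵀ) 0 (-Bᵀ) 0)

/-!
Since `Π ≥ 0`, `ker R ⊆ ker S`, and for a symmetric solution `X` the Riccati equation gives
`xᵀXx - (Ax + Bu)ᵀX(Ax + Bu) = [x; u]ᵀ Π [x; u] ≥ 0` whenever `R_X u = -S_Xᵀ x`.
For `v ∈ ker R_X` the steps `x ↦ A_X x + c • B v` are of this form, and by Cayley–Hamilton a
chain of them leads from `B v` to `0`; hence `(Bv)ᵀX(Bv) ≥ 0`, so `vᵀRv = -(Bv)ᵀX(Bv) ≤ 0` and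
`ker R_X ⊆ ker R`.

If the two kernels are equal, `R` and `R_X` have the same rank, and
`A_X = (I - B R_X† BᵀX)(A - B R† Sᵀ)` with the first factor invertible (its inverse is
`I + B R† BᵀX`). Otherwise `rank R < rank R_X`, and a `v ∈ ker R \ ker R_X` makes `X B v` a
nonzero vector in the left kernel of `A_X`, because `A_XᵀXB = K_XᵀR - S`.
-/

open Polynomial

section MoorePenrose

variable {α β : Type*} [Fintype α] [Fintype β]

def IsMoorePenroseInverse (M : Matrix α β ℝ) (P : Matrix β α ℝ) : Prop :=
  M * P * M = M ∧ P * M * P = P ∧ (M * P)ᵀ = M * P ∧ (P * M)ᵀ = P * M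

namespace IsMoorePenroseInverse

variable {M : Matrix α β ℝ} {P P' : Matrix β α ℝ}

theorem unique (h : IsMoorePenroseInverse M P) (h' : IsMoorePenroseInverse M P') : P = P' := by
  obtain ⟨h1, h2, h3, h4⟩ := h
  obtain ⟨h1', h2', h3', h4'⟩ := h'
  have hMP : M * P = M * P' :=
    calc M * P = (M * P' * (M * P))ᵀ := by rw [← Matrix.mul_assoc, h1', h3]
      _ = M * P * (M * P') := by rw [transpose_mul, h3, h3']
      _ = M * P' := by rw [← Matrix.mul_assoc, h1]
  have hPM : P * M = P' * M :=
    calc P * M = (P * M * (P' * M))ᵀ := by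
          rw [Matrix.mul_assoc, ← Matrix.mul_assoc M, h1', h4]
      _ = P' * M * (P * M) := by rw [transpose_mul, h4, h4']
      _ = P' * M := by rw [Matrix.mul_assoc, ← Matrix.mul_assoc M, h1]
  calc P = P * M * P := h2.symm
    _ = P' * M * P' := by rw [hPM, Matrix.mul_assoc, hMP, ← Matrix.mul_assoc]
    _ = P' := h2'

end IsMoorePenroseInverse

theorem isMoorePenroseInverse_mpinv {M : Matrix α β ℝ} {P : Matrix β α ℝ}
    (h : IsMoorePenroseInverse M P) : IsMoorePenroseInverse M (mpinv M) := by
  have hex : ∃ P, IsMoorePenroseInverse M P := ⟨P, h⟩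
  unfold mpinv
  exact (dif_pos hex).symm ▸ hex.choose_spec

end MoorePenrose

section Symmetric

variable {κ : Type*} [Fintype κ] {M : Matrix κ κ ℝ}

-- `0⁻¹ = 0` in `ℝ`, so `x * x⁻¹ * x = x` holds on the whole spectrum.
theorem isMoorePenroseInverse_cfc_inv [DecidableEq κ] (hM : M.IsSymm) :
    IsMoorePenroseInverse M (cfc (·⁻¹ : ℝ → ℝ) M) := by
  have hsa : IsSelfAdjoint M := isHermitian_iff_isSymm.mpr hM
  have hmul (f g : ℝ → ℝ) : cfc f M * cfc g M = cfc (fun x => f x * g x) M :=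
    (cfc_mul f g M (M.finite_spectrum.continuousOn f) (M.finite_spectrum.continuousOn g)).symm
  have hsymm (f : ℝ → ℝ) : (cfc f M)ᵀ = cfc f M :=
    (isHermitian_iff_isSymm.mp (cfc_predicate f M : IsSelfAdjoint (cfc f M))).eq
  suffices IsMoorePenroseInverse (cfc (fun x : ℝ => x) M) (cfc (·⁻¹ : ℝ → ℝ) M) by
    rwa [cfc_id' ℝ M] at this
  refine ⟨?_, ?_, ?_, ?_⟩
  · simp only [hmul, mul_inv_mul_cancel]
  · simp only [hmul]
    congr with x
    simpa using mul_inv_mul_cancel x⁻¹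
  · rw [hmul, hsymm]
  · rw [hmul, hsymm]

theorem isMoorePenroseInverse_mpinv_of_isSymm (hM : M.IsSymm) :
    IsMoorePenroseInverse M (mpinv M) := by
  classical
  exact isMoorePenroseInverse_mpinv (isMoorePenroseInverse_cfc_inv hM)

theorem isSymm_mpinv (hM : M.IsSymm) : (mpinv M).IsSymm := by
  classical
  rw [(isMoorePenroseInverse_mpinv_of_isSymm hM).unique (isMoorePenroseInverse_cfc_inv hM)]
  exact isHermitian_iff_isSymm.mp (cfc_predicate _ M)

theorem mpinv_mul_comm (hM : M.IsSymm) : mpinv M * M = M * mpinv M := by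
  rw [← (isMoorePenroseInverse_mpinv_of_isSymm hM).2.2.2, transpose_mul, hM.eq,
    (isSymm_mpinv hM).eq]

end Symmetric

section Kernel

open LinearMap (ker)

variable {K : Type*} [CommRing K] {l m n o : Type*} [Fintype n]

theorem Matrix.mul_eq_zero_of_ker_le {M : Matrix m n K} {N : Matrix l n K} {C : Matrix n o K}
    (h : ker M.mulVecLin ≤ ker N.mulVecLin) (hC : M * C = 0) : N * C = 0 := by
  ext i j
  exact congrFun (h (x := fun k => C k j) (funext fun i => congrFun (congrFun hC i) j)) i

theorem Matrix.mul_mul_eq_of_ker_le [Fintype m] {M : Matrix m n K} {P : Matrix n m K}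
    {N : Matrix l n K} (hP : M * P * M = M) (h : ker M.mulVecLin ≤ ker N.mulVecLin) :
    N * P * M = N := by
  classical
  have h0 := mul_eq_zero_of_ker_le h (C := 1 - P * M) <| by
    rw [Matrix.mul_sub, Matrix.mul_one, ← Matrix.mul_assoc, hP, sub_self]
  rwa [Matrix.mul_sub, Matrix.mul_one, sub_eq_zero, ← Matrix.mul_assoc, eq_comm] at h0

theorem Matrix.mul_mul_transpose_eq_of_ker_le {M : Matrix n n K} {P : Matrix n n K}
    {N : Matrix l n K} (hM : M.IsSymm) (hP : M * P * M = M)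
    (h : ker M.mulVecLin ≤ ker N.mulVecLin) : M * P * Nᵀ = Nᵀ := by
  have hN : M * Pᵀ * Nᵀ = Nᵀ := by
    conv_rhs => rw [← mul_mul_eq_of_ker_le hP h]
    rw [transpose_mul, transpose_mul, hM.eq, Matrix.mul_assoc]
  calc M * P * Nᵀ = M * P * M * Pᵀ * Nᵀ := by
        conv_lhs => rw [← hN]
        simp only [Matrix.mul_assoc]
    _ = Nᵀ := by rw [hP, hN]

end Kernel

section SameKernel

open LinearMap (ker)

variable {κ : Type*} [Fintype κ] {M N : Matrix κ κ ℝ}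

theorem mul_mpinv_eq_of_ker_eq (hM : M.IsSymm) (hN : N.IsSymm)
    (h : ker M.mulVecLin = ker N.mulVecLin) : M * mpinv M = N * mpinv N := by
  obtain ⟨hM1, -, hM3, -⟩ := isMoorePenroseInverse_mpinv_of_isSymm hM
  obtain ⟨hN1, -, hN3, -⟩ := isMoorePenroseInverse_mpinv_of_isSymm hN
  have hMN : M * mpinv M * (N * mpinv N) = N * mpinv N := by
    rw [← Matrix.mul_assoc, ← hN.eq, mul_mul_transpose_eq_of_ker_le hM hM1 h.le, hN.eq]
  have hNM : N * mpinv N * (M * mpinv M) = M * mpinv M := by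
    rw [← Matrix.mul_assoc, ← hM.eq, mul_mul_transpose_eq_of_ker_le hN hN1 h.ge, hM.eq]
  rw [← hNM, ← hN3, ← hM3, ← transpose_mul, hMN]

theorem mpinv_mul_sub_mul_mpinv_of_ker_eq (hM : M.IsSymm) (hN : N.IsSymm)
    (h : ker M.mulVecLin = ker N.mulVecLin) :
    mpinv N * (N - M) * mpinv M = mpinv M - mpinv N := by
  obtain ⟨-, hM2, -, -⟩ := isMoorePenroseInverse_mpinv_of_isSymm hM
  obtain ⟨-, hN2, -, -⟩ := isMoorePenroseInverse_mpinv_of_isSymm hN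
  have hproj := mul_mpinv_eq_of_ker_eq hM hN h
  rw [Matrix.mul_sub, Matrix.sub_mul, mpinv_mul_comm hN, ← hproj, ← mpinv_mul_comm hM, hM2,
    Matrix.mul_assoc, hproj, ← Matrix.mul_assoc, hN2]

end SameKernel

theorem Matrix.det_sub_mul_mul_add_eq_zero_iff {K : Type*} [Field K] {m n : Type*} [Fintype m]
    [Fintype n] [DecidableEq n] {A : Matrix n n K} {B : Matrix n m K} {C D : Matrix m n K}
    {G H : Matrix m m K} (h : G * (C * B) * H = H - G) :
    (A - B * G * (C * A + D)).det = 0 ↔ (A - B * H * D).det = 0 := by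
  have hT : (1 - B * G * C) * (1 + B * H * C) = 1 :=
    calc (1 - B * G * C) * (1 + B * H * C)
        = 1 + B * H * C - B * G * C - B * (G * (C * B) * H) * C := by
          simp only [Matrix.sub_mul, Matrix.mul_add, Matrix.mul_one, Matrix.one_mul,
            Matrix.mul_assoc]
          abel
      _ = 1 := by
          rw [h]
          simp only [Matrix.mul_sub, Matrix.sub_mul, Matrix.mul_assoc]
          abel
  have hF : (1 - B * G * C) * (A - B * H * D) = A - B * G * (C * A + D) :=
    calc (1 - B * G * C) * (A - B * H * D)
        = A - B * H * D - B * G * C * A + B * (G * (C * B) * H) * D := by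
          simp only [Matrix.mul_sub, Matrix.sub_mul, Matrix.one_mul, Matrix.mul_assoc]
          abel
      _ = A - B * G * (C * A + D) := by
          rw [h]
          simp only [Matrix.mul_sub, Matrix.sub_mul, Matrix.mul_add, Matrix.mul_assoc]
          abel
  have hdet : (1 - B * G * C).det ≠ 0 := by
    intro h0
    simpa [h0] using congrArg det hT
  rw [← hF, det_mul, mul_eq_zero, or_iff_right hdet]

theorem Matrix.rank_lt_rank_of_ker_lt {K : Type*} [Field K] {m n : Type*} [Fintype m]
    [Fintype n] {M N : Matrix m n K}
    (h : LinearMap.ker N.mulVecLin < LinearMap.ker M.mulVecLin) : M.rank < N.rank := by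
  have hM := LinearMap.finrank_range_add_finrank_ker M.mulVecLin
  have hN := LinearMap.finrank_range_add_finrank_ker N.mulVecLin
  have := Submodule.finrank_lt_finrank_of_lt h
  unfold rank
  omega

theorem Matrix.rank_eq_rank_of_ker_eq {K : Type*} [Field K] {m n : Type*} [Fintype m]
    [Fintype n] {M N : Matrix m n K}
    (h : LinearMap.ker M.mulVecLin = LinearMap.ker N.mulVecLin) : M.rank = N.rank := by
  have hM := LinearMap.finrank_range_add_finrank_ker M.mulVecLin
  have hN := LinearMap.finrank_range_add_finrank_ker N.mulVecLin
  rw [h] at hM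
  unfold rank
  omega

section CayleyHamilton

variable {R : Type*} [CommRing R] {ι : Type*} [Fintype ι] [DecidableEq ι] {α : Type*} [Preorder α]
  {V : (ι → R) → α} {M : Matrix ι ι R} {y : ι → R}

theorem Matrix.apply_aeval_mulVec_le_of_forall_mulVec_add_smul_le
    (hV : ∀ x (c : R), V (M *ᵥ x + c • y) ≤ V x) {p : R[X]} (hp : p.Monic) :
    V (aeval M p *ᵥ y) ≤ V y := by
  induction hd : p.natDegree generalizing p with
  | zero => rw [hp.natDegree_eq_zero.mp hd, map_one, one_mulVec]
  | succ d ih =>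
    have hq : p.divX.Monic := by
      rw [Monic, leadingCoeff, natDegree_divX_eq_natDegree_tsub_one, coeff_divX, hd,
        Nat.add_sub_cancel, ← hd]
      exact hp
    calc V (aeval M p *ᵥ y)
        = V (M *ᵥ (aeval M p.divX *ᵥ y) + p.coeff 0 • y) := by
          conv_lhs => rw [← X_mul_divX_add p]
          rw [map_add, map_mul, aeval_X, aeval_C, Algebra.algebraMap_eq_smul_one, add_mulVec,
            smul_mulVec, one_mulVec, mulVec_mulVec]
      _ ≤ V (aeval M p.divX *ᵥ y) := hV _ _
      _ ≤ V y := ih hq (by rw [natDegree_divX_eq_natDegree_tsub_one, hd, Nat.add_sub_cancel])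

theorem Matrix.apply_zero_le_of_forall_mulVec_add_smul_le
    (hV : ∀ x (c : R), V (M *ᵥ x + c • y) ≤ V x) : V 0 ≤ V y := by
  simpa [aeval_self_charpoly] using apply_aeval_mulVec_le_of_forall_mulVec_add_smul_le hV
    M.charpoly_monic

end CayleyHamilton

open scoped ComplexOrder in
theorem Matrix.PosSemidef.ker_le_ker_of_fromBlocks {𝕜 : Type*} [RCLike 𝕜] {m n : Type*}
    [Fintype m] [Fintype n] {A : Matrix m m 𝕜} {B : Matrix m n 𝕜} {D : Matrix n n 𝕜}
    (h : (fromBlocks A B Bᴴ D).PosSemidef) :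
    LinearMap.ker D.mulVecLin ≤ LinearMap.ker B.mulVecLin := by
  intro v hv
  rw [LinearMap.mem_ker, mulVecLin_apply] at hv ⊢
  have hw : fromBlocks A B Bᴴ D *ᵥ Sum.elim 0 v = 0 := by
    rw [← h.dotProduct_mulVec_zero_iff]
    simp [fromBlocks_mulVec, Function.star_sumElim, hv]
  simpa [fromBlocks_mulVec] using congrArg (· ∘ Sum.inl) hw

theorem Matrix.dotProduct_transpose_mul_mul_mulVec {R : Type*} [CommSemiring R]
    {l l' m n : Type*} [Fintype l] [Fintype l'] [Fintype m] [Fintype n] (M : Matrix l m R)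
    (N : Matrix l l' R) (L : Matrix l' n R) (x : m → R) (z : n → R) :
    x ⬝ᵥ (Mᵀ * N * L) *ᵥ z = (M *ᵥ x) ⬝ᵥ N *ᵥ (L *ᵥ z) := by
  rw [← mulVec_mulVec, ← mulVec_mulVec, dotProduct_mulVec, vecMul_transpose]

section Riccati

open LinearMap (ker)

variable {ι κ : Type*} [Fintype ι] [Fintype κ] {A Q : Matrix ι ι ℝ}
  {B S : Matrix ι κ ℝ} {R : Matrix κ κ ℝ} {X : Matrix ι ι ℝ}

theorem isSymm_RX (hR : R.IsSymm) (hX : X.IsSymm) : (RX R B X).IsSymm := by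
  simp [RX, IsSymm, transpose_add, transpose_mul, hR.eq, hX.eq, Matrix.mul_assoc]

theorem transpose_SX (hX : X.IsSymm) : (SX A B S X)ᵀ = Bᵀ * X * A + Sᵀ := by
  simp [SX, transpose_add, transpose_mul, hX.eq, Matrix.mul_assoc]

theorem RX_mul_KX (hR : R.IsSymm) (hX : X.IsSymm) (hK : KerCond A B S R X) :
    RX R B X * KX A B S R X = (SX A B S X)ᵀ := by
  rw [KX, ← Matrix.mul_assoc]
  exact mul_mul_transpose_eq_of_ker_le (isSymm_RX hR hX)
    (isMoorePenroseInverse_mpinv_of_isSymm (isSymm_RX hR hX)).1 fun v hv => hK v hv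

theorem transpose_AX_mul_mul (hR : R.IsSymm) (hX : X.IsSymm) (hK : KerCond A B S R X) :
    (AX A B S R X)ᵀ * X * B = (KX A B S R X)ᵀ * R - S := by
  have hKR : (KX A B S R X)ᵀ * RX R B X = SX A B S X := by
    rw [← (isSymm_RX hR hX).eq, ← transpose_mul, RX_mul_KX hR hX hK, transpose_transpose]
  rw [AX, transpose_sub, transpose_mul, Matrix.sub_mul, Matrix.sub_mul]
  calc Aᵀ * X * B - (KX A B S R X)ᵀ * Bᵀ * X * B
      = SX A B S X - (KX A B S R X)ᵀ * (Bᵀ * X * B) - S := by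
        rw [SX]
        simp only [Matrix.mul_assoc]
        abel
    _ = (KX A B S R X)ᵀ * R - S := by
        rw [← hKR, RX, Matrix.mul_add]
        abel

theorem quadForm_sub_quadForm_eq_popov (hR : R.IsSymm) (hX : X.IsSymm)
    (hric : X = Ricc A Q B S R X) {x : ι → ℝ} {u : κ → ℝ}
    (hu : RX R B X *ᵥ u = -((SX A B S X)ᵀ *ᵥ x)) :
    x ⬝ᵥ X *ᵥ x - (A *ᵥ x + B *ᵥ u) ⬝ᵥ X *ᵥ (A *ᵥ x + B *ᵥ u) =
      Sum.elim x u ⬝ᵥ fromBlocks Q S Sᵀ R *ᵥ Sum.elim x u := by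
  have hRX := isSymm_RX (B := B) hR hX
  have hu' : (SX A B S X)ᵀ *ᵥ x = -(RX R B X *ᵥ u) := by rw [hu, neg_neg]
  have hSGS : x ⬝ᵥ (SX A B S X * mpinv (RX R B X) * (SX A B S X)ᵀ) *ᵥ x =
      u ⬝ᵥ RX R B X *ᵥ u := by
    nth_rw 1 [← transpose_transpose (SX A B S X)]
    rw [dotProduct_transpose_mul_mul_mulVec, hu', mulVec_neg, neg_dotProduct, dotProduct_neg,
      neg_neg, ← dotProduct_transpose_mul_mul_mulVec, hRX.eq,
      (isMoorePenroseInverse_mpinv_of_isSymm hRX).1]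
  have hXx : x ⬝ᵥ X *ᵥ x = (A *ᵥ x) ⬝ᵥ X *ᵥ (A *ᵥ x) - u ⬝ᵥ RX R B X *ᵥ u + x ⬝ᵥ Q *ᵥ x := by
    conv_lhs => rw [hric]
    rw [Ricc, add_mulVec, sub_mulVec, dotProduct_add, dotProduct_sub, hSGS,
      dotProduct_transpose_mul_mul_mulVec]
  have hSXu : x ⬝ᵥ SX A B S X *ᵥ u = -(u ⬝ᵥ RX R B X *ᵥ u) := by
    rw [← dotProduct_transpose_mulVec, hu', dotProduct_neg]
  have hSX : x ⬝ᵥ SX A B S X *ᵥ u = (A *ᵥ x) ⬝ᵥ X *ᵥ (B *ᵥ u) + x ⬝ᵥ S *ᵥ u := by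
    rw [SX, add_mulVec, dotProduct_add, dotProduct_transpose_mul_mul_mulVec]
  have hRXu : u ⬝ᵥ RX R B X *ᵥ u = u ⬝ᵥ R *ᵥ u + (B *ᵥ u) ⬝ᵥ X *ᵥ (B *ᵥ u) := by
    rw [RX, add_mulVec, dotProduct_add, dotProduct_transpose_mul_mul_mulVec]
  have hXsymm : (B *ᵥ u) ⬝ᵥ X *ᵥ (A *ᵥ x) = (A *ᵥ x) ⬝ᵥ X *ᵥ (B *ᵥ u) := by
    rw [← dotProduct_transpose_mulVec, hX.eq]
  have hSt : u ⬝ᵥ Sᵀ *ᵥ x = x ⬝ᵥ S *ᵥ u := dotProduct_transpose_mulVec S u x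
  simp only [fromBlocks_mulVec, Sum.elim_comp_inl, Sum.elim_comp_inr, sumElim_dotProduct_sumElim,
    mulVec_add, dotProduct_add, add_dotProduct, hXsymm, hSt]
  linarith

theorem quadForm_le_of_RX_mulVec_eq (hPi : (fromBlocks Q S Sᵀ R).PosSemidef) (hR : R.IsSymm)
    (hX : X.IsSymm) (hric : X = Ricc A Q B S R X) {x : ι → ℝ} {u : κ → ℝ}
    (hu : RX R B X *ᵥ u = -((SX A B S X)ᵀ *ᵥ x)) :
    (A *ᵥ x + B *ᵥ u) ⬝ᵥ X *ᵥ (A *ᵥ x + B *ᵥ u) ≤ x ⬝ᵥ X *ᵥ x := by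
  have h := hPi.dotProduct_mulVec_nonneg (Sum.elim x u)
  rw [star_trivial, ← quadForm_sub_quadForm_eq_popov hR hX hric hu] at h
  linarith

end Riccati

section CGDARE

open LinearMap (ker)

variable {ι κ : Type*} [Fintype ι] [Fintype κ] [DecidableEq ι] {A Q : Matrix ι ι ℝ}
  {B S : Matrix ι κ ℝ} {R : Matrix κ κ ℝ} {X : Matrix ι ι ℝ}

theorem ker_RX_le_ker_R (hPi : (fromBlocks Q S Sᵀ R).PosSemidef)
    (hX : IsCGDARESolution A Q B S R X) : ker (RX R B X).mulVecLin ≤ ker R.mulVecLin := by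
  obtain ⟨hXs, hric, hK⟩ := hX
  have hRpsd : R.PosSemidef := hPi.submatrix Sum.inr
  have hR : R.IsSymm := isHermitian_iff_isSymm.mp hRpsd.isHermitian
  intro v hv
  rw [LinearMap.mem_ker, mulVecLin_apply] at hv ⊢
  have hdecr : ∀ x (c : ℝ), (AX A B S R X *ᵥ x + c • (B *ᵥ v)) ⬝ᵥ
      X *ᵥ (AX A B S R X *ᵥ x + c • (B *ᵥ v)) ≤ x ⬝ᵥ X *ᵥ x := by
    intro x c
    have hstep : AX A B S R X *ᵥ x + c • (B *ᵥ v) =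
        A *ᵥ x + B *ᵥ (c • v - KX A B S R X *ᵥ x) := by
      rw [AX, sub_mulVec, mulVec_sub, mulVec_smul, mulVec_mulVec]
      abel
    refine hstep ▸ quadForm_le_of_RX_mulVec_eq hPi hR hXs hric ?_
    rw [mulVec_sub, mulVec_smul, hv, smul_zero, zero_sub, mulVec_mulVec, RX_mul_KX hR hXs hK]
  have hBv : 0 ≤ (B *ᵥ v) ⬝ᵥ X *ᵥ (B *ᵥ v) := by
    simpa using apply_zero_le_of_forall_mulVec_add_smul_le (V := fun y => y ⬝ᵥ X *ᵥ y) hdecr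
  have hRv : v ⬝ᵥ R *ᵥ v = -((B *ᵥ v) ⬝ᵥ X *ᵥ (B *ᵥ v)) := by
    have h := congrArg (v ⬝ᵥ ·) hv
    rw [RX, add_mulVec, dotProduct_add, dotProduct_transpose_mul_mul_mulVec, dotProduct_zero] at h
    linarith
  have hRv0 : star v ⬝ᵥ R *ᵥ v = 0 := by
    rw [star_trivial]
    exact le_antisymm (by linarith) (by simpa using hRpsd.dotProduct_mulVec_nonneg v)
  exact (hRpsd.dotProduct_mulVec_zero_iff v).mp hRv0

theorem det_AX_eq_zero_of_mem_ker_R (hR : R.IsSymm) (hX : X.IsSymm) (hK : KerCond A B S R X)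
    (hRS : ker R.mulVecLin ≤ ker S.mulVecLin) {v : κ → ℝ} (hRv : R *ᵥ v = 0)
    (hRXv : RX R B X *ᵥ v ≠ 0) : (AX A B S R X).det = 0 := by
  refine exists_vecMul_eq_zero_iff.mp ⟨X *ᵥ (B *ᵥ v), fun h0 => hRXv ?_, ?_⟩
  · rw [RX, add_mulVec, hRv, zero_add, ← mulVec_mulVec, ← mulVec_mulVec, h0, mulVec_zero]
  · have hSv : S *ᵥ v = 0 := hRS hRv
    rw [← mulVec_transpose, mulVec_mulVec, mulVec_mulVec, transpose_AX_mul_mul hR hX hK,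
      sub_mulVec, ← mulVec_mulVec, hRv, mulVec_zero, hSv, sub_zero]

theorem det_AX_eq_zero_iff_of_ker_eq (hR : R.IsSymm) (hX : X.IsSymm)
    (h : ker R.mulVecLin = ker (RX R B X).mulVecLin) :
    (AX A B S R X).det = 0 ↔ (A - B * mpinv R * Sᵀ).det = 0 := by
  rw [AX, KX, transpose_SX hX, ← Matrix.mul_assoc]
  refine det_sub_mul_mul_add_eq_zero_iff ?_
  rw [← add_sub_cancel_left R (Bᵀ * X * B)]
  exact mpinv_mul_sub_mul_mpinv_of_ker_eq hR (isSymm_RX hR hX) h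

end CGDARE

theorem stmt_5_general {n m : ℕ}
    (A Q : Matrix (Fin n) (Fin n) ℝ) (B S : Matrix (Fin n) (Fin m) ℝ)
    (R : Matrix (Fin m) (Fin m) ℝ)
    (hPi : (fromBlocks Q S Sᵀ R).PosSemidef)
    (X : Matrix (Fin n) (Fin n) ℝ) (hX : IsCGDARESolution A Q B S R X) :
    (AX A B S R X).det = 0 ↔
      R.rank < (RX R B X).rank ∨ (A - B * mpinv R * Sᵀ).det = 0 := by
  have hR : R.IsSymm := isHermitian_iff_isSymm.mp (hPi.submatrix Sum.inr).isHermitian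
  have hRS := (conjTranspose_eq_transpose_of_trivial S ▸ hPi).ker_le_ker_of_fromBlocks
  have hRXR := ker_RX_le_ker_R hPi hX
  by_cases hle : LinearMap.ker R.mulVecLin ≤ LinearMap.ker (RX R B X).mulVecLin
  · have hker := le_antisymm hle hRXR
    rw [rank_eq_rank_of_ker_eq hker, lt_self_iff_false, false_or]
    exact det_AX_eq_zero_iff_of_ker_eq hR hX.1 hker
  · obtain ⟨v, hRv, hRXv⟩ := SetLike.not_le_iff_exists.mp hle
    have hlt := lt_of_le_of_ne hRXR fun h => hle h.ge
    exact iff_of_true (det_AX_eq_zero_of_mem_ker_R hR hX.1 hX.2.2 hRS hRv hRXv)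
      (Or.inl (rank_lt_rank_of_ker_lt hlt))

/-- if `X` solves CGDARE(Σ), then `A_X` is singular iff `rank R < rank R_X`
or `A - B R† Sᵀ` is singular. -/
theorem stmt_5 {n m : ℕ} (hn : 0 < n) (hm : 0 < m)
    (A Q : Matrix (Fin n) (Fin n) ℝ) (B S : Matrix (Fin n) (Fin m) ℝ)
    (R : Matrix (Fin m) (Fin m) ℝ)
    (hPi : (fromBlocks Q S Sᵀ R).PosSemidef)
    (X : Matrix (Fin n) (Fin n) ℝ) (hX : IsCGDARESolution A Q B S R X) :
    (AX A B S R X).det = 0 ↔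
      R.rank < (RX R B X).rank ∨ (A - B * mpinv R * Sᵀ).det = 0 :=
  stmt_5_general A Q B S R hPi X hX
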